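/- arXiv:1506.03042 — 5 statements merged into one kernel-verified Lean document; each statement's English description precedes it below -/
import Mathlib

section
/- Assume that for all x ≥ 5.43, π(x) < x/(log x - 1 - 1.17/log x). If for all k > 9 we have p_{k+1} - p_k < log^2 p_k - log p_k - 1.17, then Firoozbakht's conjecture p_{k+1} < p_k^{1+1/k} holds for all k ≥ 1. -/
open Real

/-- `p k` is the `k`-th prime, 1-indexed: `p 1 = 2`, `p 2 = 3`, ... -/
noncomputable def p (k : ℕ) : ℕ := Nat.nth Nat.Prime (k - 1)

private lemma nth_eq (m v : ℕ) (hv : Nat.Prime v) (hc : Nat.count Nat.Prime v = m) :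
    Nat.nth Nat.Prime m = v := by
  rw [← hc]; exact Nat.nth_count hv

private lemma nth0 : Nat.nth Nat.Prime 0 = 2 := nth_eq 0 2 (by norm_num) (by decide)
private lemma nth1 : Nat.nth Nat.Prime 1 = 3 := nth_eq 1 3 (by norm_num) (by decide)
private lemma nth2 : Nat.nth Nat.Prime 2 = 5 := nth_eq 2 5 (by norm_num) (by decide)
private lemma nth3 : Nat.nth Nat.Prime 3 = 7 := nth_eq 3 7 (by norm_num) (by decide)
private lemma nth4 : Nat.nth Nat.Prime 4 = 11 := nth_eq 4 11 (by norm_num) (by decide)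
private lemma nth5 : Nat.nth Nat.Prime 5 = 13 := nth_eq 5 13 (by norm_num) (by decide)
private lemma nth6 : Nat.nth Nat.Prime 6 = 17 := nth_eq 6 17 (by norm_num) (by decide)
private lemma nth7 : Nat.nth Nat.Prime 7 = 19 := nth_eq 7 19 (by norm_num) (by decide)
private lemma nth8 : Nat.nth Nat.Prime 8 = 23 := nth_eq 8 23 (by norm_num) (by decide)
private lemma nth9 : Nat.nth Nat.Prime 9 = 29 := nth_eq 9 29 (by norm_num) (by decide)

/-- If `a^k < b^(k+1)` with `1 ≤ a`, `1 < b`, `1 ≤ k`, then `a < b^(1+1/k)`. -/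
private lemma pow_argument (a b k : ℕ) (ha : 1 ≤ a) (hb : 1 < b) (hk : 1 ≤ k)
    (h : a ^ k < b ^ (k + 1)) : (a : ℝ) < (b : ℝ) ^ (1 + 1 / (k : ℝ)) := by
  have ha' : (1 : ℝ) ≤ (a : ℝ) := by exact_mod_cast ha
  have hb' : (1 : ℝ) < (b : ℝ) := by exact_mod_cast hb
  have hk' : (0 : ℝ) < (k : ℝ) := by exact_mod_cast hk
  have hpow : ((a : ℝ)) ^ k < ((b : ℝ)) ^ (k + 1) := by exact_mod_cast h
  have hlog : (k : ℝ) * Real.log a < ((k : ℝ) + 1) * Real.log b := by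
    have := Real.log_lt_log (by positivity) hpow
    rw [Real.log_pow, Real.log_pow] at this
    push_cast at this
    linarith
  have hlog2 : Real.log a < (1 + 1 / (k : ℝ)) * Real.log b := by
    rw [show (1 + 1 / (k : ℝ)) * Real.log b = (((k : ℝ) + 1) * Real.log b) / k by
      field_simp]
    rw [lt_div_iff₀ hk']
    nlinarith
  calc (a : ℝ) = Real.exp (Real.log a) := (Real.exp_log (by positivity)).symm
    _ < Real.exp ((1 + 1 / (k : ℝ)) * Real.log b) := Real.exp_lt_exp.mpr hlog2
    _ = (b : ℝ) ^ (1 + 1 / (k : ℝ)) := by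
        rw [Real.rpow_def_of_pos (by positivity), mul_comm]

theorem stmt_6
    (axler : ∀ x : ℝ, 5.43 ≤ x →
      (Nat.primeCounting ⌊x⌋₊ : ℝ) < x / (Real.log x - 1 - 1.17 / Real.log x))
    (hgap : ∀ k : ℕ, 9 < k →
      (p (k+1) : ℝ) - (p k : ℝ) < (Real.log (p k)) ^ 2 - Real.log (p k) - 1.17) :
    ∀ k : ℕ, 1 ≤ k → (p (k+1) : ℝ) < (p k : ℝ) ^ (1 + 1 / (k : ℝ)) := by
  intro k hk
  by_cases hk9 : k ≤ 9
  · -- small cases by direct computation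
    interval_cases k
    · simpa [p, nth0, nth1] using
        pow_argument 3 2 1 (by norm_num) (by norm_num) (by norm_num) (by norm_num)
    · simpa [p, nth1, nth2] using
        pow_argument 5 3 2 (by norm_num) (by norm_num) (by norm_num) (by norm_num)
    · simpa [p, nth2, nth3] using
        pow_argument 7 5 3 (by norm_num) (by norm_num) (by norm_num) (by norm_num)
    · simpa [p, nth3, nth4] using
        pow_argument 11 7 4 (by norm_num) (by norm_num) (by norm_num) (by norm_num)
    · simpa [p, nth4, nth5] using
        pow_argument 13 11 5 (by norm_num) (by norm_num) (by norm_num) (by norm_num)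
    · simpa [p, nth5, nth6] using
        pow_argument 17 13 6 (by norm_num) (by norm_num) (by norm_num) (by norm_num)
    · simpa [p, nth6, nth7] using
        pow_argument 19 17 7 (by norm_num) (by norm_num) (by norm_num) (by norm_num)
    · simpa [p, nth7, nth8] using
        pow_argument 23 19 8 (by norm_num) (by norm_num) (by norm_num) (by norm_num)
    · simpa [p, nth8, nth9] using
        pow_argument 29 23 9 (by norm_num) (by norm_num) (by norm_num) (by norm_num)
  · push_neg at hk9
    set q : ℕ := p k with hqdef
    set r : ℕ := p (k + 1) with hrdef
    have hmono := Nat.nth_strictMono Nat.infinite_setOf_prime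
    have hq29 : 29 ≤ q := by
      rw [hqdef, p, ← nth9]
      exact hmono.monotone (by omega)
    have hqlt : q < r := by
      rw [hqdef, hrdef, p, p]
      exact hmono (by omega)
    have hq0 : (0 : ℝ) < (q : ℝ) := by
      have : (29 : ℝ) ≤ (q : ℝ) := by exact_mod_cast hq29
      linarith
    have hq29' : (29 : ℝ) ≤ (q : ℝ) := by exact_mod_cast hq29
    have hr0 : (0 : ℝ) < (r : ℝ) := by
      have : q < r := hqlt
      have : (q : ℝ) < (r : ℝ) := by exact_mod_cast this
      linarith
    set L : ℝ := Real.log q with hLdef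
    have hL277 : (2.77 : ℝ) < L := by
      have h16 : Real.log 16 ≤ L := Real.log_le_log (by norm_num) (by linarith)
      have h16e : Real.log 16 = 4 * Real.log 2 := by
        rw [show (16 : ℝ) = 2 ^ (4 : ℕ) by norm_num, Real.log_pow]
        push_cast; ring
      nlinarith [Real.log_two_gt_d9]
    have hLpos : (0 : ℝ) < L := by linarith
    have hk' : (0 : ℝ) < (k : ℝ) := by
      have : (1 : ℕ) ≤ k := hk
      exact_mod_cast Nat.pos_of_ne_zero (by omega)
    -- prime counting at q equals k
    have hpi : (Nat.primeCounting q : ℝ) = (k : ℝ) := by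
      have h1 : Nat.primeCounting q = k := by
        rw [hqdef, p, Nat.primeCounting, Nat.primeCounting', Nat.count_succ,
          Nat.count_nth_of_infinite Nat.infinite_setOf_prime,
          if_pos (Nat.prime_nth_prime (k - 1))]
        omega
      exact_mod_cast h1
    -- apply Axler's bound at x = q
    have haxler := axler (q : ℝ) (by linarith)
    rw [Nat.floor_natCast, hpi] at haxler
    have hden : (0 : ℝ) < L - 1 - 1.17 / L := by
      have hd : 1.17 / L * L = 1.17 := div_mul_cancel₀ _ (ne_of_gt hLpos)
      have hdn : (0 : ℝ) ≤ 1.17 / L := by positivity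
      nlinarith
    have hA : (k : ℝ) * (L - 1 - 1.17 / L) < (q : ℝ) := by
      rw [← lt_div_iff₀ hden]; exact haxler
    have heq : (L - 1 - 1.17 / L) * L = L ^ 2 - L - 1.17 := by
      field_simp
    have e1 : (k : ℝ) * (L ^ 2 - L - 1.17) < (q : ℝ) * L := by
      calc (k : ℝ) * (L ^ 2 - L - 1.17) = ((k : ℝ) * (L - 1 - 1.17 / L)) * L := by
            rw [← heq]; ring
        _ < (q : ℝ) * L := mul_lt_mul_of_pos_right hA hLpos
    have hB : (r : ℝ) - (q : ℝ) < L ^ 2 - L - 1.17 := hgap k hk9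
    have hC : Real.log r - L ≤ ((r : ℝ) - q) / q := by
      have h1 := Real.log_le_sub_one_of_pos (show (0 : ℝ) < (r : ℝ) / q by positivity)
      rw [Real.log_div (ne_of_gt hr0) (ne_of_gt hq0)] at h1
      have h2 : (r : ℝ) / q - 1 = ((r : ℝ) - q) / q := by field_simp
      rw [h2] at h1
      exact h1
    have e3 : Real.log r - L < (L ^ 2 - L - 1.17) / q :=
      lt_of_le_of_lt hC (by gcongr)
    have e4 : (L ^ 2 - L - 1.17) / q < L / (k : ℝ) := by
      rw [div_lt_div_iff₀ hq0 hk']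
      nlinarith
    have e5 : Real.log r < L + L / (k : ℝ) := by linarith
    have hlog : Real.log r < (1 + 1 / (k : ℝ)) * L := by
      have : (1 + 1 / (k : ℝ)) * L = L + L / (k : ℝ) := by ring
      linarith [this ▸ e5]
    calc (r : ℝ) = Real.exp (Real.log r) := (Real.exp_log hr0).symm
      _ < Real.exp ((1 + 1 / (k : ℝ)) * L) := Real.exp_lt_exp.mpr hlog
      _ = (q : ℝ) ^ (1 + 1 / (k : ℝ)) := by
          rw [Real.rpow_def_of_pos hq0, mul_comm, hLdef]
end

section
/- Assume the double bound x/(log x - 1 - 1/log x - 1/log^2 x) < π(x) < x/(log x - 1 - 1/log x - 3.83/log^2 x) for all x ≥ 1772201. Then f_k := p_k^{1+1/k} - p_k satisfies f_k = log^2 p_k - log p_k - 1 + o(1) as k → ∞. -/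
open Real

/-!
Write `x = p k` and `L = log x`, so that `π x = k` and `x ^ (1 + 1/k) - x = x (e^t - 1)` with
`t = L / k`. Axler's bounds pin `x / k` between `L - 1 - 1/L - 3.83/L²` and `L - 1 - 1/L - 1/L²`,
hence `x t = L · x / k = L² - L - 1 + O(1/L)`. Since `k > x / L`, `t < L² / x` is tiny, and
`x (e^t - 1 - t) ≤ x t² ≤ L⁴ / x`.
-/

open Filter Topology

lemma primeCounting_p {k : ℕ} (hk : 1 ≤ k) : Nat.primeCounting (p k) = k := by
  rw [p, Nat.primeCounting_eq_primeCounting'_succ, Nat.primeCounting', Nat.count_succ,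
    ← Nat.primeCounting', Nat.primeCounting'_nth_eq, if_pos (Nat.prime_nth_prime _)]
  omega

lemma tendsto_p_atTop : Tendsto p atTop atTop :=
  (Nat.nth_strictMono Nat.infinite_setOfPred_prime).tendsto_atTop.comp (tendsto_sub_atTop_nat 1)

lemma tendsto_log_pow_div_self (n : ℕ) : Tendsto (fun x : ℝ => log x ^ n / x) atTop (𝓝 0) := by
  simpa using tendsto_pow_log_div_mul_add_atTop 1 0 n one_ne_zero

lemma eventually_log_sq_le_self : ∀ᶠ x : ℝ in atTop, log x ^ 2 ≤ x := by
  filter_upwards [(tendsto_log_pow_div_self 2).eventually (ge_mem_nhds one_pos),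
    eventually_gt_atTop 0] with x hle hx
  rwa [div_le_one hx] at hle

lemma abs_mul_exp_sub_one_sub_le {x k L : ℝ} (hx : 0 < x) (hk : 0 < k) (hL : 0 ≤ L)
    (hxk : x / k ≤ L) (hLx : L ^ 2 ≤ x) :
    |x * (exp (L / k) - 1) - L * (x / k)| ≤ L ^ 4 / x := by
  have ht : |L / k| ≤ 1 := by
    rw [abs_of_nonneg (by positivity), div_le_one hk]
    rw [div_le_iff₀ hk] at hxk
    nlinarith
  calc |x * (exp (L / k) - 1) - L * (x / k)| = x * |exp (L / k) - 1 - L / k| := by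
        rw [← abs_of_pos hx, ← abs_mul, abs_of_pos hx]; ring_nf
    _ ≤ x * (L / k) ^ 2 := by gcongr; exact abs_exp_sub_one_sub_id_le ht
    _ = (x / k) ^ 2 * L ^ 2 / x := by field_simp
    _ ≤ L ^ 2 * L ^ 2 / x := by gcongr
    _ = L ^ 4 / x := by ring

lemma abs_mul_sub_sq_sub_sub_one_le {L y a b : ℝ} (hL : 0 < L) (ha : 0 ≤ a) (hb : 0 ≤ b)
    (hlo : L - 1 - 1 / L - b / L ^ 2 < y) (hhi : y < L - 1 - 1 / L - a / L ^ 2) :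
    |L * y - (L ^ 2 - L - 1)| ≤ b / L := by
  have hlo' : L ^ 2 - L - 1 - b / L < L * y := by
    calc L ^ 2 - L - 1 - b / L = L * (L - 1 - 1 / L - b / L ^ 2) := by field_simp
      _ < L * y := by gcongr
  have hhi' : L * y < L ^ 2 - L - 1 - a / L := by
    calc L * y < L * (L - 1 - 1 / L - a / L ^ 2) := by gcongr
      _ = L ^ 2 - L - 1 - a / L := by field_simp
  have : 0 ≤ a / L := by positivity
  have : 0 ≤ b / L := by positivity
  rw [abs_le]
  constructor <;> linarith

lemma abs_rpow_one_add_inv_sub_le {x k : ℝ} (hL : 3 ≤ log x) (hLx : log x ^ 2 ≤ x)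
    (hlo : x / (log x - 1 - 1 / log x - 1 / log x ^ 2) < k)
    (hhi : k < x / (log x - 1 - 1 / log x - 3.83 / log x ^ 2)) :
    |x ^ (1 + 1 / k) - x - (log x ^ 2 - log x - 1)| ≤ 3.83 / log x + log x ^ 4 / x := by
  set L := log x
  have hx : 0 < x := by nlinarith
  have hinv : 1 / L ≤ 1 / 3 := one_div_le_one_div_of_le (by norm_num) hL
  have hinv_sq : 3.83 / L ^ 2 ≤ 3.83 / 3 ^ 2 := by gcongr
  have hinv_pos : 0 < 1 / L := by positivity
  have hD : 0 < L - 1 - 1 / L - 3.83 / L ^ 2 := by norm_num at hinv_sq; linarith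
  have hD' : 0 < L - 1 - 1 / L - 1 / L ^ 2 := by
    have : 1 / L ^ 2 ≤ 3.83 / L ^ 2 := by gcongr; norm_num
    linarith
  have hk : 0 < k := (div_pos hx hD').trans hlo
  have hxk_lo : L - 1 - 1 / L - 3.83 / L ^ 2 < x / k := by rwa [lt_div_iff₀ hk, ← lt_div_iff₀' hD]
  have hxk_hi : x / k < L - 1 - 1 / L - 1 / L ^ 2 := by rwa [div_lt_iff₀ hk, ← div_lt_iff₀' hD']
  have hxk : x / k ≤ L := by
    have : 0 < 1 / L ^ 2 := by positivity
    linarith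
  have hrpow : x ^ (1 + 1 / k) = x * exp (L / k) := by
    rw [rpow_add hx, rpow_one, rpow_def_of_pos hx, mul_one_div]
  have hTaylor := abs_mul_exp_sub_one_sub_le hx hk (by linarith) hxk hLx
  have hmain := abs_mul_sub_sq_sub_sub_one_le (by linarith) zero_le_one (by norm_num) hxk_lo hxk_hi
  calc |x ^ (1 + 1 / k) - x - (L ^ 2 - L - 1)|
      = |(x * (exp (L / k) - 1) - L * (x / k)) + (L * (x / k) - (L ^ 2 - L - 1))| := by
        rw [hrpow]; ring_nf
    _ ≤ L ^ 4 / x + 3.83 / L := (abs_add_le _ _).trans (add_le_add hTaylor hmain)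
    _ = 3.83 / L + L ^ 4 / x := add_comm _ _

theorem stmt_10
    (axler : ∀ x : ℝ, 1772201 ≤ x →
      x / (Real.log x - 1 - 1 / Real.log x - 1 / (Real.log x) ^ 2) <
          (Nat.primeCounting ⌊x⌋₊ : ℝ) ∧
        (Nat.primeCounting ⌊x⌋₊ : ℝ) <
          x / (Real.log x - 1 - 1 / Real.log x - 3.83 / (Real.log x) ^ 2)) :
    Filter.Tendsto
      (fun k : ℕ =>
        ((p k : ℝ) ^ (1 + 1 / (k : ℝ)) - (p k : ℝ)) -
          ((Real.log (p k)) ^ 2 - Real.log (p k) - 1))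
      Filter.atTop (nhds 0) := by
  have hp : Tendsto (fun k => (p k : ℝ)) atTop atTop :=
    tendsto_natCast_atTop_atTop.comp tendsto_p_atTop
  have hbound : Tendsto (fun x : ℝ => 3.83 / log x + log x ^ 4 / x) atTop (𝓝 0) := by
    simpa [div_eq_mul_inv] using (tendsto_log_atTop.inv_tendsto_atTop.const_mul 3.83).add
      (tendsto_log_pow_div_self 4)
  refine squeeze_zero_norm' ?_ (hbound.comp hp)
  filter_upwards [hp.eventually_ge_atTop 1772201,
    hp.eventually (tendsto_log_atTop.eventually_ge_atTop 3),
    hp.eventually eventually_log_sq_le_self, eventually_ge_atTop 1] with k hbig hL hLx hk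
  obtain ⟨hlo, hhi⟩ := axler _ hbig
  rw [Nat.floor_natCast, primeCounting_p hk] at hlo hhi
  exact abs_rpow_one_add_inv_sub_le hL hLx hlo hhi
end

section
/- Assume π(x) < x/(log x - 1 - 1/log x - 3.83/log^2 x) for all x ≥ 1772201. Then for all k with p_k ≥ 1772201, with f_k := p_k^{1+1/k} - p_k, we have log^2 p_k - log p_k - 1 - 3.83/log p_k < f_k. -/
open Real

theorem stmt_11
    (axler : ∀ x : ℝ, 1772201 ≤ x →
      (Nat.primeCounting ⌊x⌋₊ : ℝ) <
        x / (Real.log x - 1 - 1 / Real.log x - 3.83 / (Real.log x) ^ 2)) :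
    ∀ k : ℕ, 1772201 ≤ p k →
      (Real.log (p k)) ^ 2 - Real.log (p k) - 1 - 3.83 / Real.log (p k) <
        (p k : ℝ) ^ (1 + 1 / (k : ℝ)) - (p k : ℝ) := by
  intro k hk
  have hk1 : 1 ≤ k := by
    by_contra h
    interval_cases k
    · simp [p, Nat.nth_prime_zero_eq_two] at hk
  set q : ℕ := p k with hq
  -- π(q) = k
  have hπ : Nat.primeCounting q = k := by
    rw [hq, p, Nat.primeCounting, Nat.primeCounting',
      Nat.count_nth_succ_of_infinite Nat.infinite_setOf_prime]
    omega
  have hqr : (1772201 : ℝ) ≤ (q : ℝ) := by exact_mod_cast hk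
  have hfloor : ⌊(q : ℝ)⌋₊ = q := Nat.floor_natCast q
  have hax := axler (q : ℝ) hqr
  rw [hfloor, hπ] at hax
  set L : ℝ := Real.log (q : ℝ) with hL
  have hq0 : (0 : ℝ) < (q : ℝ) := by linarith
  have hL14 : (14 : ℝ) ≤ L := by
    have h1 : Real.exp 14 ≤ (q : ℝ) := by
      have he : Real.exp 1 ≤ 2.7182818286 := le_of_lt Real.exp_one_lt_d9
      have : Real.exp 14 = (Real.exp 1) ^ (14 : ℕ) := by
        rw [← Real.exp_nat_mul]; norm_num
      rw [this]
      calc (Real.exp 1) ^ (14:ℕ) ≤ (2.7182818286:ℝ) ^ (14:ℕ) := by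
            exact pow_le_pow_left₀ (Real.exp_pos 1).le he 14
        _ ≤ 1772201 := by norm_num
        _ ≤ (q : ℝ) := hqr
    calc (14:ℝ) = Real.log (Real.exp 14) := (Real.log_exp 14).symm
      _ ≤ L := Real.log_le_log (Real.exp_pos 14) h1
  have hL0 : (0 : ℝ) < L := by linarith
  set D : ℝ := L - 1 - 1 / L - 3.83 / L ^ 2 with hD
  have hD0 : (0 : ℝ) < D := by
    rw [hD]
    have h1 : 1 / L ≤ 1 / 14 := by
      apply div_le_div_of_nonneg_left <;> linarith
    have h2 : 3.83 / L ^ 2 ≤ 3.83 / 14 ^ 2 := by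
      apply div_le_div_of_nonneg_left
      · norm_num
      · norm_num
      · nlinarith
    nlinarith
  have hkD : (k : ℝ) * D < (q : ℝ) := by
    have := (lt_div_iff₀ hD0).mp hax
    linarith
  have hk0 : (0 : ℝ) < (k : ℝ) := by exact_mod_cast hk1
  -- q^{1+1/k} = q * exp(L/k)
  have hrw : (q : ℝ) ^ (1 + 1 / (k : ℝ)) = (q : ℝ) * Real.exp (L / k) := by
    rw [Real.rpow_def_of_pos hq0, ← hL]
    rw [show L * (1 + 1 / (k:ℝ)) = L + L / k by field_simp]
    rw [Real.exp_add, Real.exp_log hq0]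
  have hexp : 1 + L / k ≤ Real.exp (L / k) := by
    have := Real.add_one_le_exp (L / k)
    linarith
  have key : D * L < (q : ℝ) ^ (1 + 1 / (k : ℝ)) - (q : ℝ) := by
    rw [hrw]
    have h1 : (q : ℝ) * Real.exp (L / k) - q ≥ (q : ℝ) * (L / k) := by
      nlinarith
    have h2 : D * L < (q : ℝ) * (L / k) := by
      rw [show (q:ℝ) * (L / k) = (q:ℝ) * L / k by ring, lt_div_iff₀ hk0]
      nlinarith
    linarith
  have hDL : D * L = L ^ 2 - L - 1 - 3.83 / L := by
    rw [hD]; field_simp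
  linarith [key, hDL.symm.le, hDL.le]
end

section
/- If k ≥ 1, real numbers satisfy (log p_{k+1} - log p_k)(p_k + log^2 p_k) < log^2 p_k - log p_k - 1, then p_{k+1} - p_k < (p_k/(p_k + log p_k + 1))·(log^2 p_k - log p_k - 1), and in particular p_{k+1} - p_k < log^2 p_k - log p_k - 1. -/
open Real

theorem stmt_13 (k : ℕ) (hk : 1 ≤ k)
    (h : (Real.log (p (k+1)) - Real.log (p k)) * ((p k : ℝ) + (Real.log (p k)) ^ 2) <
      (Real.log (p k)) ^ 2 - Real.log (p k) - 1) :
    (p (k+1) : ℝ) - (p k : ℝ) <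
        (p k : ℝ) / ((p k : ℝ) + Real.log (p k) + 1) *
          ((Real.log (p k)) ^ 2 - Real.log (p k) - 1) ∧
      (p (k+1) : ℝ) - (p k : ℝ) < (Real.log (p k)) ^ 2 - Real.log (p k) - 1 := by
  have hq2 : 2 ≤ p k := (Nat.prime_nth_prime (k - 1)).two_le
  have hlt : p k < p (k + 1) := by
    have : k + 1 - 1 = k := rfl
    unfold p
    rw [this]
    exact (Nat.nth_lt_nth Nat.infinite_setOf_prime).mpr (Nat.sub_lt hk one_pos)
  set q : ℝ := (p k : ℝ) with hqdef
  set Q : ℝ := (p (k+1) : ℝ) with hQdef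
  set L : ℝ := Real.log q with hLdef
  have h2 : (2:ℝ) ≤ q := by rw [hqdef]; exact_mod_cast hq2
  have hd : q + 1 ≤ Q := by
    have : p k + 1 ≤ p (k+1) := hlt
    rw [hqdef, hQdef]; exact_mod_cast this
  have hQpos : 0 < Q := by linarith
  have hqpos : 0 < q := by linarith
  have hL : 0 < L := Real.log_pos (by linarith)
  have hlog : 1 - q / Q ≤ Real.log Q - L := by
    have h1 := Real.log_le_sub_one_of_pos (show 0 < q / Q by positivity)
    rw [Real.log_div (ne_of_gt hqpos) (ne_of_gt hQpos)] at h1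
    have : q / Q ≤ 1 := by
      rw [div_le_one hQpos]; linarith
    linarith
  -- (Q - q)/Q ≤ log Q - L, so (Q-q)*(q+L^2) < Q * M
  have hqL2 : 0 < q + L ^ 2 := by positivity
  have hkey : (Q - q) * (q + L ^ 2) < Q * (L ^ 2 - L - 1) := by
    have h3 : (Q - q) / Q ≤ Real.log Q - L := by
      rw [sub_div, div_self (ne_of_gt hQpos)]; linarith
    have h4 : (Q - q) / Q * (q + L ^ 2) ≤ (Real.log Q - L) * (q + L ^ 2) :=
      mul_le_mul_of_nonneg_right h3 (le_of_lt hqL2)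
    have h5 : (Q - q) / Q * (q + L ^ 2) < L ^ 2 - L - 1 := lt_of_le_of_lt h4 h
    calc (Q - q) * (q + L ^ 2) = ((Q - q) / Q * (q + L ^ 2)) * Q := by
          field_simp
      _ < (L ^ 2 - L - 1) * Q := by
          exact mul_lt_mul_of_pos_right h5 hQpos
      _ = Q * (L ^ 2 - L - 1) := by ring
  -- so (Q - q)*(q + L + 1) < q * M
  have hmain : (Q - q) * (q + L + 1) < q * (L ^ 2 - L - 1) := by nlinarith
  have hden : 0 < q + L + 1 := by linarith
  have hM : 0 < L ^ 2 - L - 1 := by nlinarith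
  constructor
  · rw [div_mul_eq_mul_div, lt_div_iff₀ hden]
    linarith [hmain]
  · nlinarith
end

section
/- For all k with p_k ≥ 11783 and p_k ≥ 1772201 (assuming Axler's lower bound on π(x) for x ≥ 1772201), f_k := p_k^{1+1/k} - p_k < ℓ_k := log^2 p_k - log p_k. -/
open Real

lemma log_le_div_e {x : ℝ} (hx : 0 < x) : Real.log x ≤ x / Real.exp 1 := by
  have h := Real.log_le_sub_one_of_pos (x := x / Real.exp 1) (by positivity)
  rw [Real.log_div (ne_of_gt hx) (Real.exp_ne_zero 1), Real.log_exp] at h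
  linarith

lemma log_pow_four_le {P : ℝ} (hP : (1772201 : ℝ) ≤ P) : (Real.log P) ^ 4 ≤ P := by
  have hP0 : (0 : ℝ) < P := by linarith
  set s : ℝ := Real.sqrt P with hs
  have hs0 : (0 : ℝ) < s := Real.sqrt_pos.mpr hP0
  have hs1331 : (1331 : ℝ) ≤ s := by
    have : (1331 : ℝ) = Real.sqrt (1331 ^ 2) := by
      rw [Real.sqrt_sq]; norm_num
    rw [this]
    exact Real.sqrt_le_sqrt (by norm_num; linarith)
  have hss : s * s = P := Real.mul_self_sqrt hP0.le
  have hlogP : Real.log P = 2 * Real.log s := by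
    rw [hs, Real.log_sqrt hP0.le]; ring
  -- bound log s ≤ 4 * s^(1/4) / e
  have hq0 : (0 : ℝ) < s ^ ((1:ℝ)/4) := Real.rpow_pos_of_pos hs0 _
  have hlogs : Real.log s = 4 * Real.log (s ^ ((1:ℝ)/4)) := by
    rw [Real.log_rpow hs0]; ring
  have hb : Real.log (s ^ ((1:ℝ)/4)) ≤ s ^ ((1:ℝ)/4) / Real.exp 1 :=
    log_le_div_e hq0
  have hq4 : (s ^ ((1:ℝ)/4)) ^ (4:ℕ) = s := by
    rw [← Real.rpow_natCast (s ^ ((1:ℝ)/4)) 4, ← Real.rpow_mul hs0.le]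
    norm_num
  have he : (2.7182818283 : ℝ) < Real.exp 1 := Real.exp_one_gt_d9
  have he0 : (0 : ℝ) < Real.exp 1 := Real.exp_pos 1
  have hlogs_nonneg : 0 ≤ Real.log s := Real.log_nonneg (by linarith)
  have h1 : Real.log s ≤ 4 * (s ^ ((1:ℝ)/4)) / Real.exp 1 := by
    have heq : 4 * (s ^ ((1:ℝ)/4) / Real.exp 1) = 4 * (s ^ ((1:ℝ)/4)) / Real.exp 1 := by
      ring
    rw [hlogs, ← heq]
    linarith
  have h2 : (Real.log s) ^ 4 ≤ (4 * (s ^ ((1:ℝ)/4)) / Real.exp 1) ^ 4 := by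
    apply pow_le_pow_left₀ hlogs_nonneg h1
  have h3 : (4 * (s ^ ((1:ℝ)/4)) / Real.exp 1) ^ 4 = 256 * s / (Real.exp 1) ^ 4 := by
    field_simp
    nlinarith [hq4]
  have he4 : (54 : ℝ) ≤ (Real.exp 1) ^ 4 := by
    have h4 : (2.7182818283:ℝ) ^ (4:ℕ) ≤ (Real.exp 1) ^ (4:ℕ) :=
      pow_le_pow_left₀ (by norm_num) he.le 4
    norm_num at h4 ⊢
    linarith
  have h4 : (Real.log s) ^ 4 ≤ 256 * s / 54 := by
    rw [h3] at h2
    have : 256 * s / (Real.exp 1) ^ 4 ≤ 256 * s / 54 := by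
      apply div_le_div_of_nonneg_left (by linarith) (by norm_num) he4
    linarith
  rw [hlogP]
  have : (2 * Real.log s) ^ 4 = 16 * (Real.log s) ^ 4 := by ring
  rw [this]
  nlinarith [hss, hs1331]

lemma pi_p_eq (k : ℕ) (hk : 1 ≤ k) : Nat.primeCounting (p k) = k := by
  have hinf : (setOf Nat.Prime).Infinite := Nat.infinite_setOf_prime
  rw [p, Nat.primeCounting, Nat.primeCounting',
    Nat.count_nth_succ_of_infinite hinf]
  omega

set_option maxHeartbeats 1000000 in
theorem stmt_19
    (axler : ∀ x : ℝ, 1772201 ≤ x →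
      x / (Real.log x - 1 - 1 / Real.log x - 1 / (Real.log x) ^ 2) <
        (Nat.primeCounting ⌊x⌋₊ : ℝ)) :
    ∀ k : ℕ, 11783 ≤ p k → 1772201 ≤ p k →
      (p k : ℝ) ^ (1 + 1 / (k : ℝ)) - (p k : ℝ) <
        (Real.log (p k)) ^ 2 - Real.log (p k) := by
  intro k h1 h2
  have hk1 : 1 ≤ k := by
    by_contra h
    have hk0 : k = 0 := by omega
    rw [hk0, p] at h1
    simp [Nat.nth_prime_zero_eq_two] at h1
  set P : ℝ := (p k : ℝ) with hPdef
  have hP : (1772201 : ℝ) ≤ P := by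
    show (1772201 : ℝ) ≤ ((p k : ℕ) : ℝ)
    exact_mod_cast h2
  have hP0 : (0 : ℝ) < P := by linarith
  set L : ℝ := Real.log P with hLdef
  -- L ≥ 14
  have hL14 : (14 : ℝ) ≤ L := by
    rw [hLdef, Real.le_log_iff_exp_le hP0]
    have h14 : Real.exp (14 : ℝ) = Real.exp 1 ^ (14:ℕ) := by
      rw [← Real.exp_nat_mul]; norm_num
    have he : Real.exp 1 < 2.7182818286 := Real.exp_one_lt_d9
    have : Real.exp 1 ^ (14:ℕ) ≤ (2.7182818286:ℝ) ^ (14:ℕ) :=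
      pow_le_pow_left₀ (Real.exp_pos 1).le he.le 14
    have hnum : (2.7182818286:ℝ) ^ (14:ℕ) ≤ 1772201 := by norm_num
    rw [h14]; linarith
  have hL0 : (0 : ℝ) < L := by linarith
  -- axler bound
  have hax := axler P hP
  rw [Nat.floor_natCast, pi_p_eq k hk1] at hax
  rw [← hLdef] at hax
  have hD : (0 : ℝ) < L - 1 - 1/L - 1/L^2 := by
    have h1L : 1/L ≤ 1/14 := by
      apply div_le_div_of_nonneg_left (by norm_num) (by norm_num) hL14
    have h2L : 1/L^2 ≤ 1/196 := by
      apply div_le_div_of_nonneg_left (by norm_num) (by norm_num) (by nlinarith)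
    linarith
  have hK0 : (0 : ℝ) < (k : ℝ) := by
    have : (0:ℝ) < P / (L - 1 - 1/L - 1/L^2) := div_pos hP0 hD
    linarith
  set t : ℝ := L / (k : ℝ) with htdef
  have ht0 : 0 < t := div_pos hL0 hK0
  -- P * t < A where A = L^2 - L - 1 - 1/L
  have hPD : P / (L - 1 - 1/L - 1/L^2) < (k:ℝ) := hax
  have hPt : P * t < L^2 - L - 1 - 1/L := by
    have hPD' : P < (k:ℝ) * (L - 1 - 1/L - 1/L^2) := by
      rwa [div_lt_iff₀ hD] at hPD
    have hexp : (k:ℝ) * (L - 1 - 1/L - 1/L^2) * L = (k:ℝ) * (L^2 - L - 1 - 1/L) := by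
      field_simp
    have hPL : P * L < (k:ℝ) * (L^2 - L - 1 - 1/L) := by nlinarith
    rw [htdef, mul_div_assoc', div_lt_iff₀ hK0]
    nlinarith
  have hA : (0:ℝ) < L^2 - L - 1 - 1/L := by
    have h1L : 1/L ≤ 1/14 := by
      apply div_le_div_of_nonneg_left (by norm_num) (by norm_num) hL14
    nlinarith
  -- t * L^2 < 1
  have hL4 : L ^ 4 ≤ P := log_pow_four_le hP
  have htL2 : t * L^2 < 1 := by
    have h1 : t * L^4 ≤ t * P := by nlinarith
    have h2 : t * P < L^2 := by
      have hpos : (0:ℝ) < 1/L := by positivity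
      nlinarith
    nlinarith
  have ht1 : t < 1 := by
    nlinarith [mul_nonneg ht0.le (by nlinarith : (0:ℝ) ≤ L^2 - 196)]
  -- exp bound
  set E : ℝ := Real.exp t with hEdef
  have hE0 : (0:ℝ) < E := Real.exp_pos t
  have hE1 : (1:ℝ) ≤ E := by
    rw [hEdef]; exact Real.one_le_exp ht0.le
  have hEt : (1 - t) * E < 1 := by
    have h := Real.add_one_lt_exp (x := -t) (by linarith [ht0] : (-t) ≠ 0)
    rw [Real.exp_neg, ← hEdef] at h
    have : (1 - t) < E⁻¹ := by linarith
    calc (1 - t) * E < E⁻¹ * E := by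
          apply mul_lt_mul_of_pos_right this hE0
    _ = 1 := inv_mul_cancel₀ (ne_of_gt hE0)
  -- rewrite goal
  have hrw : P ^ (1 + 1 / (k:ℝ)) = P * E := by
    rw [Real.rpow_def_of_pos hP0, ← hLdef, hEdef, htdef]
    rw [← Real.exp_log hP0, ← hLdef, ← Real.exp_add]
    ring_nf
  rw [hrw]
  -- final: P * E - P < L^2 - L
  -- P (E - 1) < P t E < A E < A/(1-t) < L^2 - L
  have key1 : P * E - P < P * t * E := by nlinarith
  have key2 : P * t * E < (L^2 - L - 1 - 1/L) * E := by nlinarith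
  have key3 : (L^2 - L - 1 - 1/L) * E * (1 - t) < (L^2 - L - 1 - 1/L) := by
    nlinarith
  have key4 : (L^2 - L - 1 - 1/L) < (L^2 - L) * (1 - t) := by
    have h1L : 0 < 1/L := by positivity
    nlinarith [mul_pos ht0 hL0]
  nlinarith [mul_pos hE0 (by linarith : (0:ℝ) < 1 - t)]
end
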